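/- Fix L > 0 and 0 < k < 2π/L, and let G^{0,k} be the quasiperiodic Green's function at quasiperiodicity α = 0 defined by its spectral representation. Let 𝒫₁₂ : ℝ³ → ℝ³ be given by 𝒫₁₂(x₁,x₂,x₃) = (−x₁,−x₂,x₃). Let D ⊂ ℝ³ be a bounded set with 𝒫₁₂(∂D) = ∂D, let μ be the 2-dimensional Hausdorff measure restricted to ∂D, choose R > 0 with ∂D ⊆ {y : |y₃| ≤ R}, and let φ : ℝ³ → ℂ be μ-integrable with φ(𝒫₁₂ y) = −φ(y) for μ-almost every y. Then: (i) ∫_{∂D} e^{−i k y₃} φ(y) dμ(y) = 0 and ∫_{∂D} e^{i k y₃} φ(y) dμ(y) = 0; and (ii) there exist constants C > 0 and c > 0 such that |∫_{∂D} G^{0,k}(x−y) φ(y) dμ(y)| ≤ C e^{−c|x₃|} for every x with |x₃| ≥ R + 1. -/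

import Mathlib

/-!
𝒫₁₂ is an isometric involution that fixes the third coordinate and preserves `∂D`, so it
preserves the surface measure on `∂D`, and each `y ↦ e^{i r y₃} φ(y)` is odd and integrates to
zero; this gives (i). For `|x₃| ≥ R + 1` and `y ∈ ∂D` we have
`|x₃ − y₃| = |x₃| − sign(x₃) y₃`, so the propagating term of `G^{0,k}(x − y)` is a function of
`x` times `e^{−i sign(x₃) k y₃}` and integrates to zero against `φ`. What remains is the
evanescent series: the mode `q ≠ 0` decays like `e^{−√(|q|² − k²) |x₃|}`, and `k < 2π/L` makes
every such rate at least `c = √((2π/L)² − k²) > 0`, while the excess rates still grow linearly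
in `|q|`, so the series is bounded by a multiple of `e^{−c |x₃|}`.
-/

open MeasureTheory

noncomputable section

abbrev R2 : Type := EuclideanSpace ℝ (Fin 2)
abbrev R3 : Type := EuclideanSpace ℝ (Fin 3)

/-- The dual lattice vector `(2π/L) q` for `q ∈ ℤ²`. -/
def dualVec (L : ℝ) (q : ℤ × ℤ) : R2 :=
  (2 * Real.pi / L) • (EuclideanSpace.equiv (Fin 2) ℝ).symm ![(q.1 : ℝ), (q.2 : ℝ)]

/-- The evanescent mode associated to `q ∈ Λ* \ {0}`. -/
def evanescent (L : ℝ) (α : R2) (k : ℝ) (q : ℤ × ℤ) (x : R3) : ℂ :=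
  Complex.exp (Complex.I * (((α + dualVec L q) 0 * x 0 + (α + dualVec L q) 1 * x 1 : ℝ) : ℂ)) *
    Complex.exp ((-(Real.sqrt (‖α + dualVec L q‖ ^ 2 - k ^ 2) * |x 2|) : ℝ) : ℂ) /
      ((2 * L ^ 2 * Real.sqrt (‖α + dualVec L q‖ ^ 2 - k ^ 2) : ℝ) : ℂ)

/-- `k₃ = √(k² − |α|²)`. -/
def kthree (α : R2) (k : ℝ) : ℝ := Real.sqrt (k ^ 2 - ‖α‖ ^ 2)

/-- The quasiperiodic Green's function `G^{α,k}`, via its spectral representation. -/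
def Gf (L : ℝ) (α : R2) (k : ℝ) (x : R3) : ℂ :=
  Complex.exp (Complex.I * ((α 0 * x 0 + α 1 * x 1 : ℝ) : ℂ)) *
      Complex.exp (Complex.I * ((kthree α k * |x 2| : ℝ) : ℂ)) /
      (2 * Complex.I * ((kthree α k : ℝ) : ℂ) * ((L : ℝ) : ℂ) ^ 2) -
    ∑' q : {q : ℤ × ℤ // q ≠ 0}, evanescent L α k q.1 x

/-- The reflection `𝒫₁₂(x₁,x₂,x₃) = (−x₁,−x₂,x₃)`. -/
def P12 (x : R3) : R3 := (EuclideanSpace.equiv (Fin 3) ℝ).symm ![-(x 0), -(x 1), x 2]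

open Real

theorem integral_eq_zero_of_ae_comp_eq_neg {α E : Type*} [MeasurableSpace α]
    [NormedAddCommGroup E] [NormedSpace ℝ E] {μ : Measure α} {e : α → α}
    (he : MeasurePreserving e μ μ) (he' : MeasurableEmbedding e) {f : α → E}
    (hf : ∀ᵐ y ∂μ, f (e y) = -f y) : ∫ y, f y ∂μ = 0 := by
  have h := he.integral_comp he' f
  rw [integral_congr_ae hf, integral_neg, neg_eq_iff_add_eq_zero, ← two_smul ℝ] at h
  exact (smul_eq_zero.mp h).resolve_left two_ne_zero

theorem IsometryEquiv.measurePreserving_hausdorffMeasure_restrict {X : Type*} [EMetricSpace X]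
    [MeasurableSpace X] [BorelSpace X] (e : X ≃ᵢ X) (d : ℝ) {F : Set X} (hF : e '' F = F) :
    MeasurePreserving e (μH[d].restrict F) (μH[d].restrict F) := by
  simpa only [hF] using (e.measurePreserving_hausdorffMeasure d).restrict_image_emb
    e.toHomeomorph.measurableEmbedding F

theorem P12_apply (x : R3) (i : Fin 3) : P12 x i = ![-(x 0), -(x 1), x 2] i := rfl

theorem P12_involutive : Function.Involutive P12 := by
  intro x
  ext i
  fin_cases i <;> simp [P12_apply]

theorem isometry_P12 : Isometry P12 := by
  refine Isometry.of_dist_eq fun x y => ?_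
  simp [EuclideanSpace.dist_eq, Fin.sum_univ_three, P12_apply]

def isometryEquivP12 : R3 ≃ᵢ R3 where
  toEquiv := P12_involutive.toPerm
  isometry_toFun := isometry_P12

theorem integral_exp_mul_eq_zero_of_odd {F : Set R3} (hF : P12 '' F = F) {φ : R3 → ℂ}
    (hodd : ∀ᵐ y ∂((μH[2] : Measure R3).restrict F), φ (P12 y) = -φ y) (r : ℝ) :
    ∫ y, Complex.exp (Complex.I * ((r * y 2 : ℝ) : ℂ)) * φ y
      ∂((μH[2] : Measure R3).restrict F) = 0 := by
  refine integral_eq_zero_of_ae_comp_eq_neg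
    (isometryEquivP12.measurePreserving_hausdorffMeasure_restrict 2 hF)
    isometryEquivP12.toHomeomorph.measurableEmbedding ?_
  filter_upwards [hodd] with y hy
  change Complex.exp (Complex.I * ((r * P12 y 2 : ℝ) : ℂ)) * φ (P12 y) = _
  rw [hy, mul_neg, show P12 y 2 = y 2 from rfl]

theorem norm_dualVec_sq (L : ℝ) (q : ℤ × ℤ) :
    ‖dualVec L q‖ ^ 2 = (2 * π / L) ^ 2 * ((q.1 : ℝ) ^ 2 + (q.2 : ℝ) ^ 2) := by
  rw [dualVec, norm_smul, mul_pow, EuclideanSpace.norm_eq, Fin.sum_univ_two,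
    sq_sqrt (by positivity)]
  simp [div_pow, mul_pow]

theorem one_le_intCast_sq_add_sq {q : ℤ × ℤ} (hq : q ≠ 0) :
    1 ≤ (q.1 : ℝ) ^ 2 + (q.2 : ℝ) ^ 2 := by
  have : q.1 ≠ 0 ∨ q.2 ≠ 0 := by
    contrapose! hq
    exact Prod.ext hq.1 hq.2
  have : (1 : ℤ) ≤ q.1 ^ 2 + q.2 ^ 2 := by
    rcases this with h | h <;> nlinarith [Int.one_le_abs h, sq_abs q.1, sq_abs q.2]
  exact_mod_cast this

def decayRate (L k : ℝ) (q : ℤ × ℤ) : ℝ := √(‖dualVec L q‖ ^ 2 - k ^ 2)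

-- the rate of the slowest evanescent modes, those with `|q| = 2π/L`
def minDecayRate (L k : ℝ) : ℝ := √((2 * π / L) ^ 2 - k ^ 2)

section DecayRate

variable {L k : ℝ}

theorem minDecayRate_pos (hk : 0 ≤ k) (hk2 : k < 2 * π / L) : 0 < minDecayRate L k :=
  sqrt_pos.mpr (by nlinarith)

theorem minDecayRate_le_decayRate {q : ℤ × ℤ} (hq : q ≠ 0) :
    minDecayRate L k ≤ decayRate L k q := by
  rw [minDecayRate, decayRate, norm_dualVec_sq]
  gcongr
  nlinarith [one_le_intCast_sq_add_sq hq, sq_nonneg (2 * π / L)]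

theorem minDecayRate_mul_le_decayRate (hk : 0 ≤ k) (hk2 : k < 2 * π / L) {q : ℤ × ℤ}
    (hq : q ≠ 0) : minDecayRate L k * ((|(q.1 : ℝ)| + |(q.2 : ℝ)|) / 2) ≤ decayRate L k q := by
  set s := (|(q.1 : ℝ)| + |(q.2 : ℝ)|) / 2 with hs_def
  rw [minDecayRate, decayRate, norm_dualVec_sq, ← sqrt_sq (by positivity : 0 ≤ s),
    ← sqrt_mul (by nlinarith)]
  have hm := one_le_intCast_sq_add_sq hq
  have hs : s ^ 2 ≤ (q.1 : ℝ) ^ 2 + (q.2 : ℝ) ^ 2 := by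
    rw [hs_def]
    nlinarith [sq_nonneg (|(q.1 : ℝ)| - |(q.2 : ℝ)|), sq_abs (q.1 : ℝ), sq_abs (q.2 : ℝ)]
  have hP : 0 ≤ (2 * π / L) ^ 2 - k ^ 2 := by nlinarith
  gcongr
  nlinarith [mul_le_mul_of_nonneg_left hs hP]

theorem summable_exp_neg_mul_abs_int {a : ℝ} (ha : 0 < a) :
    Summable fun n : ℤ => exp (-a * |(n : ℝ)|) := by
  have h : Summable fun n : ℕ => exp (-a * n) := by
    simpa only [mul_comm] using summable_exp_nat_mul_iff.mpr (neg_neg_of_pos ha)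
  exact .of_nat_of_neg (by simpa using h) (by simpa using h)

theorem summable_exp_neg_decayRate (hk : 0 ≤ k) (hk2 : k < 2 * π / L) :
    Summable fun q : {q : ℤ × ℤ // q ≠ 0} => exp (-decayRate L k q) := by
  have ha : 0 < minDecayRate L k / 2 := by linarith [minDecayRate_pos hk hk2]
  have h := (summable_exp_neg_mul_abs_int ha).mul_of_nonneg (summable_exp_neg_mul_abs_int ha)
    (fun _ => (exp_pos _).le) (fun _ => (exp_pos _).le)
  refine (h.comp_injective Subtype.val_injective).of_nonneg_of_le (fun _ => (exp_pos _).le)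
    fun q => ?_
  rw [Function.comp_apply, ← exp_add, exp_le_exp]
  linarith [minDecayRate_mul_le_decayRate hk hk2 q.2]

end DecayRate

theorem norm_evanescent_zero (L k : ℝ) (q : ℤ × ℤ) (z : R3) :
    ‖evanescent L 0 k q z‖ = exp (-(decayRate L k q * |z 2|)) / (2 * L ^ 2 * decayRate L k q) := by
  rw [evanescent, zero_add, norm_div, norm_mul, mul_comm Complex.I, Complex.norm_exp_ofReal_mul_I,
    one_mul, Complex.norm_exp_ofReal, Complex.norm_real, Real.norm_eq_abs]
  change _ / |2 * L ^ 2 * decayRate L k q| = _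
  rw [abs_of_nonneg (mul_nonneg (by positivity) (sqrt_nonneg _) : 0 ≤ 2 * L ^ 2 * decayRate L k q)]
  rfl

section Evanescent

variable {L k : ℝ}

theorem norm_evanescent_le (hL : 0 < L) (hk : 0 ≤ k) (hk2 : k < 2 * π / L) {q : ℤ × ℤ}
    (hq : q ≠ 0) {z : R3} (hz : 1 ≤ |z 2|) :
    ‖evanescent L 0 k q z‖ ≤ exp (minDecayRate L k) / (2 * L ^ 2 * minDecayRate L k) *
      exp (-decayRate L k q) * exp (-(minDecayRate L k * |z 2|)) := by
  have hc := minDecayRate_pos hk hk2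
  have hcB : minDecayRate L k ≤ decayRate L k q := minDecayRate_le_decayRate hq
  rw [norm_evanescent_zero, div_mul_eq_mul_div, div_mul_eq_mul_div, ← exp_add, ← exp_add]
  gcongr exp ?_ / (2 * L ^ 2 * ?_)
  nlinarith

theorem exists_norm_tsum_evanescent_le (hL : 0 < L) (hk : 0 ≤ k) (hk2 : k < 2 * π / L) :
    ∃ K, 0 ≤ K ∧ ∀ z : R3, 1 ≤ |z 2| →
      ‖∑' q : {q : ℤ × ℤ // q ≠ 0}, evanescent L 0 k q.1 z‖ ≤
        K * exp (-(minDecayRate L k * |z 2|)) := by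
  have hc := minDecayRate_pos hk hk2
  have hS := summable_exp_neg_decayRate hk hk2
  refine ⟨exp (minDecayRate L k) / (2 * L ^ 2 * minDecayRate L k) *
    ∑' q : {q : ℤ × ℤ // q ≠ 0}, exp (-decayRate L k q), by positivity, fun z hz => ?_⟩
  rw [← tsum_mul_left, ← tsum_mul_right]
  exact tsum_of_norm_bounded ((hS.mul_left _).mul_right _).hasSum
    fun q => norm_evanescent_le hL hk hk2 q.2 hz

end Evanescent

theorem Gf_zero_apply (L : ℝ) {k : ℝ} (hk : 0 ≤ k) (z : R3) :
    Gf L 0 k z = Complex.exp (Complex.I * ((k * |z 2| : ℝ) : ℂ)) /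
        (2 * Complex.I * (k : ℂ) * (L : ℂ) ^ 2) -
      ∑' q : {q : ℤ × ℤ // q ≠ 0}, evanescent L 0 k q.1 z := by
  simp [Gf, kthree, sqrt_sq hk]

theorem abs_sub_eq_abs_sub_sign_mul {a b : ℝ} (h : |b| ≤ |a|) :
    |a - b| = |a| - Real.sign a * b := by
  rcases lt_trichotomy a 0 with ha | rfl | ha
  · rw [abs_of_neg ha] at h ⊢
    rw [Real.sign_of_neg ha, abs_of_nonpos (by linarith [(abs_le.mp h).1])]
    ring
  · simp_all
  · rw [abs_of_pos ha] at h ⊢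
    rw [Real.sign_of_pos ha, abs_of_nonneg (by linarith [(abs_le.mp h).2])]
    ring

theorem norm_integral_le_of_ae_eq_sub {α E : Type*} [MeasurableSpace α] [NormedAddCommGroup E]
    [NormedSpace ℝ E] {μ : Measure α} {f g h : α → E} {b : α → ℝ} (hfgh : f =ᵐ[μ] g - h)
    (hg : Integrable g μ) (hg0 : ∫ y, g y ∂μ = 0) (hb : Integrable b μ)
    (hhb : ∀ᵐ y ∂μ, ‖h y‖ ≤ b y) : ‖∫ y, f y ∂μ‖ ≤ ∫ y, b y ∂μ := by
  by_cases hf : Integrable f μ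
  · have hh : Integrable h μ := (hg.sub hf).congr <| by
      filter_upwards [hfgh] with y hy
      simp [hy]
    rw [integral_congr_ae hfgh, integral_sub' hg hh, hg0, zero_sub, norm_neg]
    exact norm_integral_le_of_norm_le hb hhb
  · rw [integral_undef hf, norm_zero]
    exact integral_nonneg_of_ae (hhb.mono fun y hy => (norm_nonneg _).trans hy)

theorem Gf_zero_sub_eq (L : ℝ) {k : ℝ} (hk : 0 ≤ k) {x y : R3} (hxy : |y 2| ≤ |x 2|) :
    Gf L 0 k (x - y) = Complex.exp (Complex.I * ((k * |x 2| : ℝ) : ℂ)) /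
        (2 * Complex.I * (k : ℂ) * (L : ℂ) ^ 2) *
        Complex.exp (Complex.I * ((-(Real.sign (x 2) * k) * y 2 : ℝ) : ℂ)) -
      ∑' q : {q : ℤ × ℤ // q ≠ 0}, evanescent L 0 k q.1 (x - y) := by
  rw [Gf_zero_apply L hk, PiLp.sub_apply, abs_sub_eq_abs_sub_sign_mul hxy, div_mul_eq_mul_div,
    ← Complex.exp_add]
  congr 4
  push_cast
  ring

theorem norm_integral_Gf_zero_mul_le {L k R K c : ℝ} (hk : 0 ≤ k) (hK : 0 ≤ K) (hc : 0 ≤ c)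
    (hev : ∀ z : R3, 1 ≤ |z 2| →
      ‖∑' q : {q : ℤ × ℤ // q ≠ 0}, evanescent L 0 k q.1 z‖ ≤ K * exp (-(c * |z 2|)))
    {ν : Measure R3} (hνR : ∀ᵐ y ∂ν, |y 2| ≤ R) {φ : R3 → ℂ} (hφ : Integrable φ ν)
    (hzero : ∀ r : ℝ, ∫ y, Complex.exp (Complex.I * ((r * y 2 : ℝ) : ℂ)) * φ y ∂ν = 0)
    {x : R3} (hx : R + 1 ≤ |x 2|) :
    ‖∫ y, Gf L 0 k (x - y) * φ y ∂ν‖ ≤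
      K * exp (c * R) * (∫ y, ‖φ y‖ ∂ν) * exp (-c * |x 2|) := by
  set A := Complex.exp (Complex.I * ((k * |x 2| : ℝ) : ℂ)) /
    (2 * Complex.I * (k : ℂ) * (L : ℂ) ^ 2)
  set r := -(Real.sign (x 2) * k)
  have hwave : Integrable (fun y => Complex.exp (Complex.I * ((r * y 2 : ℝ) : ℂ)) * φ y) ν :=
    hφ.bdd_mul (c := 1) (by fun_prop) (.of_forall fun y => by
      rw [mul_comm, Complex.norm_exp_ofReal_mul_I])
  have hbound : ∀ᵐ y ∂ν,
      ‖(∑' q : {q : ℤ × ℤ // q ≠ 0}, evanescent L 0 k q.1 (x - y)) * φ y‖ ≤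
        K * exp (c * R) * exp (-c * |x 2|) * ‖φ y‖ := by
    filter_upwards [hνR] with y hy
    have hxy : |x 2| - R ≤ |(x - y) 2| := by
      rw [PiLp.sub_apply]
      linarith [abs_sub_abs_le_abs_sub (x 2) (y 2)]
    rw [norm_mul, mul_assoc K, ← exp_add]
    gcongr
    refine (hev _ (by linarith)).trans ?_
    gcongr
    nlinarith
  rw [mul_right_comm _ (∫ y, ‖φ y‖ ∂ν), ← integral_const_mul]
  refine norm_integral_le_of_ae_eq_sub
    (g := fun y => A * (Complex.exp (Complex.I * ((r * y 2 : ℝ) : ℂ)) * φ y))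
    ?_ (hwave.const_mul A) (by rw [integral_const_mul, hzero, mul_zero])
    (hφ.norm.const_mul _) hbound
  filter_upwards [hνR] with y hy
  simp only [Pi.sub_apply, Gf_zero_sub_eq L hk (hy.trans (by linarith : R ≤ |x 2|))]
  ring

theorem boundStateInContinuum_general (L : ℝ) (hL : 0 < L) (k : ℝ) (hk : 0 < k)
    (hk2 : k < 2 * Real.pi / L)
    (D : Set R3) (hsym : P12 '' frontier D = frontier D)
    (R : ℝ) (hDR : frontier D ⊆ {y : R3 | |y 2| ≤ R})
    (φ : R3 → ℂ) (hφ : Integrable φ ((μH[2] : Measure R3).restrict (frontier D)))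
    (hodd : ∀ᵐ y ∂((μH[2] : Measure R3).restrict (frontier D)), φ (P12 y) = -φ y) :
    ((∫ y, Complex.exp (-(Complex.I * ((k * y 2 : ℝ) : ℂ))) * φ y
        ∂((μH[2] : Measure R3).restrict (frontier D)) = 0) ∧
      (∫ y, Complex.exp (Complex.I * ((k * y 2 : ℝ) : ℂ)) * φ y
        ∂((μH[2] : Measure R3).restrict (frontier D)) = 0)) ∧
    ∃ C > (0 : ℝ), ∃ c > (0 : ℝ), ∀ x : R3, R + 1 ≤ |x 2| →
      ‖∫ y, Gf L 0 k (x - y) * φ y ∂((μH[2] : Measure R3).restrict (frontier D))‖ ≤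
        C * Real.exp (-c * |x 2|) := by
  have hzero := integral_exp_mul_eq_zero_of_odd hsym hodd
  refine ⟨⟨by simpa [mul_comm Complex.I] using hzero (-k), hzero k⟩, ?_⟩
  obtain ⟨K, hK, hev⟩ := exists_norm_tsum_evanescent_le hL hk.le hk2
  have hc := minDecayRate_pos hk.le hk2
  have hνR : ∀ᵐ y ∂((μH[2] : Measure R3).restrict (frontier D)), |y 2| ≤ R :=
    ae_restrict_of_forall_mem isClosed_frontier.measurableSet hDR
  set A := K * exp (minDecayRate L k * R) *
    ∫ y, ‖φ y‖ ∂((μH[2] : Measure R3).restrict (frontier D))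
  have hA : 0 ≤ A := by positivity
  refine ⟨A + 1, by positivity, minDecayRate L k, hc, fun x hx => ?_⟩
  calc _ ≤ A * exp (-minDecayRate L k * |x 2|) :=
        norm_integral_Gf_zero_mul_le hk.le hK hc.le hev hνR hφ hzero hx
    _ ≤ (A + 1) * exp (-minDecayRate L k * |x 2|) := by gcongr; linarith

/-- On a structure symmetric under `𝒫₁₂`, a density odd under `𝒫₁₂` generates a field
with vanishing propagating amplitudes and hence exponentially decaying in the far field:
the associated mode is a bound state in the continuum (Proposition 5.2 of the paper). -/
theorem boundStateInContinuum (L : ℝ) (hL : 0 < L) (k : ℝ) (hk : 0 < k)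
    (hk2 : k < 2 * Real.pi / L)
    (D : Set R3) (hD : Bornology.IsBounded D) (hsym : P12 '' frontier D = frontier D)
    (R : ℝ) (hR : 0 < R) (hDR : frontier D ⊆ {y : R3 | |y 2| ≤ R})
    (φ : R3 → ℂ) (hφ : Integrable φ ((μH[2] : Measure R3).restrict (frontier D)))
    (hodd : ∀ᵐ y ∂((μH[2] : Measure R3).restrict (frontier D)), φ (P12 y) = -φ y) :
    ((∫ y, Complex.exp (-(Complex.I * ((k * y 2 : ℝ) : ℂ))) * φ y
        ∂((μH[2] : Measure R3).restrict (frontier D)) = 0) ∧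
      (∫ y, Complex.exp (Complex.I * ((k * y 2 : ℝ) : ℂ)) * φ y
        ∂((μH[2] : Measure R3).restrict (frontier D)) = 0)) ∧
    ∃ C > (0 : ℝ), ∃ c > (0 : ℝ), ∀ x : R3, R + 1 ≤ |x 2| →
      ‖∫ y, Gf L 0 k (x - y) * φ y ∂((μH[2] : Measure R3).restrict (frontier D))‖ ≤
        C * Real.exp (-c * |x 2|) :=
  boundStateInContinuum_general L hL k hk hk2 D hsym R hDR φ hφ hodd
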